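/- arXiv:2601.03006 — 9 statements merged into one kernel-verified Lean document; each statement's English description precedes it below -/
import Mathlib

section
/- Let F : ℝ → ℝ be continuous and dissipative, i.e. (y₁ − y₂)(F(y₁) − F(y₂)) ≤ 0 for all y₁, y₂ ∈ ℝ, and let α > 0. Then for every y ∈ ℝ there exists a unique x ∈ ℝ such that x − α·F(x) = y. -/
/-- For continuous dissipative `F : ℝ → ℝ` and `α > 0`, for every
`y` the equation `x - α·F(x) = y` has a unique solution `x`. -/
theorem yosida_resolvent_exists_unique
    (F : ℝ → ℝ) (hFcont : Continuous F)
    (hFdiss : ∀ y₁ y₂ : ℝ, (y₁ - y₂) * (F y₁ - F y₂) ≤ 0)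
    (α : ℝ) (hα : 0 < α) (y : ℝ) :
    ∃! x : ℝ, x - α * F x = y := by
  set G : ℝ → ℝ := fun x => x - α * F x with hG
  have hGcont : Continuous G := continuous_id.sub (continuous_const.mul hFcont)
  have key : ∀ a b : ℝ, (b - a) ^ 2 ≤ (b - a) * (G b - G a) := by
    intro a b
    have h := hFdiss b a
    have : (b - a) * (G b - G a) = (b - a) ^ 2 - α * ((b - a) * (F b - F a)) := by
      simp only [hG]; ring
    rw [this]
    nlinarith [mul_nonpos_of_nonneg_of_nonpos (le_of_lt hα) h]
  -- strict monotonicity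
  have hmono : StrictMono G := by
    intro a b hab
    have h := key a b
    have hba : 0 < b - a := sub_pos.mpr hab
    have h2 : 0 < (b - a) ^ 2 := by positivity
    have h3 : 0 < (b - a) * (G b - G a) := lt_of_lt_of_le h2 h
    nlinarith
  -- bounds
  set b := |y - G 0| + 1 with hb
  have hb1 : 1 ≤ b := by have := abs_nonneg (y - G 0); linarith
  have hbpos : 0 < b := lt_of_lt_of_le one_pos hb1
  have hGb : y ≤ G b := by
    have h := key 0 b
    have : b * b ≤ b * (G b - G 0) := by nlinarith
    have hle : b ≤ G b - G 0 := le_of_mul_le_mul_left this hbpos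
    have : y - G 0 ≤ |y - G 0| := le_abs_self _
    nlinarith
  have hGnb : G (-b) ≤ y := by
    have h := key (-b) 0
    have : b * b ≤ b * (G 0 - G (-b)) := by nlinarith
    have hle : b ≤ G 0 - G (-b) := le_of_mul_le_mul_left this hbpos
    have : -(y - G 0) ≤ |y - G 0| := neg_le_abs _
    nlinarith
  obtain ⟨x, _, hx⟩ := intermediate_value_Icc (by linarith : (-b : ℝ) ≤ b)
    (hGcont.continuousOn) ⟨hGnb, hGb⟩
  refine ⟨x, hx, fun z hz => ?_⟩
  exact hmono.injective (hz.trans hx.symm)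
end

section
/- Let F : ℝ → ℝ be continuous and dissipative, and for α > 0 let Jᵅ(y) denote the unique solution x of x − α·F(x) = y and Fᵅ(y) := F(Jᵅ(y)) = (Jᵅ(y) − y)/α. Then for all α, β > 0 and all y₁, y₂ ∈ ℝ: (Fᵅ(y₁) − Fᵝ(y₂))(y₁ − y₂) ≤ (α + β)·(|Fᵅ(y₁)| + |Fᵝ(y₂)|)². -/
/-- Mixed dissipativity estimate for Yosida approximations with
parameters `α, β`:
`(Fᵅ(y₁) − Fᵝ(y₂))(y₁ − y₂) ≤ (α + β)(|Fᵅ(y₁)| + |Fᵝ(y₂)|)²`. -/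
theorem yosida_approx_mixed_estimate
    (F : ℝ → ℝ) (hFcont : Continuous F)
    (hFdiss : ∀ y₁ y₂ : ℝ, (y₁ - y₂) * (F y₁ - F y₂) ≤ 0)
    (J : ℝ → ℝ → ℝ)
    (hJ : ∀ α : ℝ, 0 < α → ∀ y : ℝ, J α y - α * F (J α y) = y)
    (α β : ℝ) (hα : 0 < α) (hβ : 0 < β) (y₁ y₂ : ℝ) :
    (F (J α y₁) - F (J β y₂)) * (y₁ - y₂) ≤
      (α + β) * (|F (J α y₁)| + |F (J β y₂)|) ^ 2 := by
  have h1 := hJ α hα y₁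
  have h2 := hJ β hβ y₂
  have hd := hFdiss (J α y₁) (J β y₂)
  set a := F (J α y₁)
  set b := F (J β y₂)
  have ha1 : a ≤ |a| := le_abs_self a
  have ha2 : -a ≤ |a| := neg_le_abs a
  have hb1 : b ≤ |b| := le_abs_self b
  have hb2 : -b ≤ |b| := neg_le_abs b
  have hy1 : y₁ = J α y₁ - α * a := h1.symm
  have hy2 : y₂ = J β y₂ - β * b := h2.symm
  rw [hy1, hy2]
  have key : (a - b) * (J α y₁ - α * a - (J β y₂ - β * b)) =
      (J α y₁ - J β y₂) * (a - b) - (α * a ^ 2 + β * b ^ 2 - (α + β) * (a * b)) := by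
    ring
  have hab : a * b ≤ |a| * |b| := by
    rw [← abs_mul]; exact le_abs_self _
  have h3 : (α + β) * (a * b) ≤ (α + β) * (|a| * |b|) :=
    mul_le_mul_of_nonneg_left hab (add_pos hα hβ).le
  have h4 : 0 ≤ α * a ^ 2 := mul_nonneg hα.le (sq_nonneg a)
  have h5 : 0 ≤ β * b ^ 2 := mul_nonneg hβ.le (sq_nonneg b)
  have h6 : (α + β) * (|a| * |b|) ≤ (α + β) * (|a| + |b|) ^ 2 := by
    apply mul_le_mul_of_nonneg_left _ (add_pos hα hβ).le
    nlinarith [abs_nonneg a, abs_nonneg b, mul_nonneg (abs_nonneg a) (abs_nonneg b)]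
  rw [key]
  linarith [hd]
end

section
/- Let L ≥ 0 and let F : ℝ × ℝ → ℝ be such that for each z ∈ ℝ the function y ↦ F(y,z) is continuous and dissipative, and |F(y,z₁) − F(y,z₂)| ≤ L|z₁ − z₂| for all y, z₁, z₂ ∈ ℝ. For α > 0 let Jᵅ(y,z) denote the unique solution x of x − α·F(x,z) = y and Fᵅ(y,z) := F(Jᵅ(y,z), z) = (Jᵅ(y,z) − y)/α. Then |Fᵅ(y,z₁) − Fᵅ(y,z₂)| ≤ L·|z₁ − z₂| for all y, z₁, z₂ ∈ ℝ. -/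
/-- If `F(·,z)` is continuous and dissipative for each `z` and `F`
is `L`-Lipschitz in `z`, then the Yosida approximation
`Fᵅ(y,z) = F(Jᵅ(y,z),z)` is `L`-Lipschitz in `z`. -/
theorem yosida_approx_lipschitz_in_z
    (L : ℝ) (hL : 0 ≤ L) (F : ℝ → ℝ → ℝ)
    (hFcont : ∀ z : ℝ, Continuous fun y => F y z)
    (hFdiss : ∀ z y₁ y₂ : ℝ, (y₁ - y₂) * (F y₁ z - F y₂ z) ≤ 0)
    (hFLip : ∀ y z₁ z₂ : ℝ, |F y z₁ - F y z₂| ≤ L * |z₁ - z₂|)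
    (α : ℝ) (hα : 0 < α) (J : ℝ → ℝ → ℝ)
    (hJ : ∀ y z : ℝ, J y z - α * F (J y z) z = y)
    (y z₁ z₂ : ℝ) :
    |F (J y z₁) z₁ - F (J y z₂) z₂| ≤ L * |z₁ - z₂| := by
  set x₁ := J y z₁ with hx₁
  set x₂ := J y z₂ with hx₂
  have h1 := hJ y z₁
  have h2 := hJ y z₂
  have hdiff : x₁ - x₂ = α * (F x₁ z₁ - F x₂ z₂) := by
    have : x₁ - α * F x₁ z₁ = x₂ - α * F x₂ z₂ := by rw [h1, h2]
    linarith [this]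
  -- key bound: |x₁ - x₂| ≤ α * L * |z₁ - z₂|
  have hkey : |x₁ - x₂| ≤ α * (L * |z₁ - z₂|) := by
    have hd := hFdiss z₁ x₁ x₂
    have hlip := hFLip x₂ z₁ z₂
    have hsq : (x₁ - x₂) * (x₁ - x₂) ≤ α * ((x₁ - x₂) * (F x₂ z₁ - F x₂ z₂)) := by
      have : (x₁ - x₂) * (x₁ - x₂) =
          α * ((x₁ - x₂) * (F x₁ z₁ - F x₂ z₁)) +
          α * ((x₁ - x₂) * (F x₂ z₁ - F x₂ z₂)) := by
        rw [hdiff]; ring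
      nlinarith [mul_nonneg hα.le (neg_nonneg.mpr hd)]
    have h3 : (x₁ - x₂) * (F x₂ z₁ - F x₂ z₂) ≤ |x₁ - x₂| * (L * |z₁ - z₂|) := by
      calc (x₁ - x₂) * (F x₂ z₁ - F x₂ z₂) ≤ |(x₁ - x₂) * (F x₂ z₁ - F x₂ z₂)| := le_abs_self _
        _ = |x₁ - x₂| * |F x₂ z₁ - F x₂ z₂| := abs_mul _ _
        _ ≤ |x₁ - x₂| * (L * |z₁ - z₂|) := by
            exact mul_le_mul_of_nonneg_left hlip (abs_nonneg _)
    have hsq2 : |x₁ - x₂| * |x₁ - x₂| ≤ α * (|x₁ - x₂| * (L * |z₁ - z₂|)) := by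
      have := mul_le_mul_of_nonneg_left h3 hα.le
      calc |x₁ - x₂| * |x₁ - x₂| = (x₁ - x₂) * (x₁ - x₂) := by
            rw [← abs_mul, abs_of_nonneg (mul_self_nonneg _)]
        _ ≤ α * ((x₁ - x₂) * (F x₂ z₁ - F x₂ z₂)) := hsq
        _ ≤ α * (|x₁ - x₂| * (L * |z₁ - z₂|)) := this
    rcases eq_or_lt_of_le (abs_nonneg (x₁ - x₂)) with h0 | h0
    · rw [← h0]; positivity
    · exact le_of_mul_le_mul_right (by nlinarith [hsq2]) h0
  have : |F x₁ z₁ - F x₂ z₂| = |x₁ - x₂| / α := by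
    rw [hdiff, abs_mul, abs_of_pos hα]
    field_simp
  rw [this]
  rw [div_le_iff₀ hα]
  calc |x₁ - x₂| ≤ α * (L * |z₁ - z₂|) := hkey
    _ = L * |z₁ - z₂| * α := by ring
end

section
/- Let u ≥ 0 and let f : ℝ × ℝ → ℝ be continuous in its first argument and satisfy the monotonicity condition (y₁ − y₂)(f(y₁,z) − f(y₂,z)) ≤ u·|y₁ − y₂|² for all y₁, y₂, z ∈ ℝ. Set F(y,z) := f(y,z) − u·y, for α > 0 let Jᵅ(y,z) be the unique solution x of x − α·F(x,z) = y, Fᵅ(y,z) := F(Jᵅ(y,z),z), and fᵅ(y,z) := Fᵅ(y,z) + u·y. Then |fᵅ(y,z)| ≤ |f(y,z)| + 2u·|y| for all y, z ∈ ℝ. -/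
/-- `|fᵅ(y,z)| ≤ |f(y,z)| + 2u·|y|` for the approximation
`fᵅ(y,z) = F(Jᵅ(y,z),z) + u·y`. -/
theorem yosida_falpha_abs_le
    (u : ℝ) (hu : 0 ≤ u) (f : ℝ → ℝ → ℝ)
    (hfcont : ∀ z : ℝ, Continuous fun y => f y z)
    (hfmono : ∀ y₁ y₂ z : ℝ, (y₁ - y₂) * (f y₁ z - f y₂ z) ≤ u * |y₁ - y₂| ^ 2)
    (α : ℝ) (hα : 0 < α) (J : ℝ → ℝ → ℝ)
    (hJ : ∀ y z : ℝ, J y z - α * (f (J y z) z - u * J y z) = y)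
    (y z : ℝ) :
    |(f (J y z) z - u * J y z) + u * y| ≤ |f y z| + 2 * u * |y| := by
  set a := f (J y z) z - u * J y z with ha
  set b := f y z - u * y with hb
  have hdiff : J y z - y = α * a := by
    have := hJ y z; rw [ha]; linarith
  have hJeq : J y z = y + α * a := by linarith
  have hmono := hfmono (J y z) y z
  have hab : α * (a * (a - b)) ≤ 0 := by
    have h1 : f (J y z) z = a + u * J y z := by rw [ha]; ring
    have h2 : f y z = b + u * y := by rw [hb]; ring
    rw [h1, h2, hJeq, sq_abs] at hmono
    nlinarith [hmono]
  have hab' : a * (a - b) ≤ 0 := by nlinarith [hab, hα]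
  have habs : |a| ≤ |b| := by
    nlinarith [sq_abs a, sq_abs b, le_abs_self (a * b), abs_mul a b,
      abs_nonneg a, abs_nonneg b, hab']
  calc |a + u * y| ≤ |a| + |u * y| := abs_add_le _ _
    _ ≤ |b| + u * |y| := by rw [abs_mul, abs_of_nonneg hu]; linarith
    _ ≤ (|f y z| + |u * y|) + u * |y| := by
        have := abs_sub (f y z) (u * y); linarith [this]
    _ = |f y z| + 2 * u * |y| := by rw [abs_mul, abs_of_nonneg hu]; ring
end

section
/- Let u ≥ 0, h ≥ 0, and let f : ℝ × ℝ → ℝ be continuous in its first argument, satisfy the monotonicity condition (y₁ − y₂)(f(y₁,z) − f(y₂,z)) ≤ u·|y₁ − y₂|² for all y₁, y₂, z ∈ ℝ, and satisfy the growth condition |f(y,0)| ≤ h + u·|y| for all y ∈ ℝ. Set F(y,z) := f(y,z) − u·y, for α > 0 let Jᵅ(y,z) be the unique solution x of x − α·F(x,z) = y, Fᵅ(y,z) := F(Jᵅ(y,z),z), and fᵅ(y,z) := Fᵅ(y,z) + u·y. Then |fᵅ(y,0)| ≤ h + 3u·|y| for all y ∈ ℝ. -/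
/-- Under the growth condition `|f(y,0)| ≤ h + u·|y|`, the
approximation satisfies `|fᵅ(y,0)| ≤ h + 3u·|y|`. -/
theorem yosida_falpha_growth_at_zero
    (u h : ℝ) (hu : 0 ≤ u) (hh : 0 ≤ h) (f : ℝ → ℝ → ℝ)
    (hfcont : ∀ z : ℝ, Continuous fun y => f y z)
    (hfmono : ∀ y₁ y₂ z : ℝ, (y₁ - y₂) * (f y₁ z - f y₂ z) ≤ u * |y₁ - y₂| ^ 2)
    (hfgrow : ∀ y : ℝ, |f y 0| ≤ h + u * |y|)
    (α : ℝ) (hα : 0 < α) (J : ℝ → ℝ → ℝ)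
    (hJ : ∀ y z : ℝ, J y z - α * (f (J y z) z - u * J y z) = y)
    (y : ℝ) :
    |(f (J y 0) 0 - u * J y 0) + u * y| ≤ h + 3 * u * |y| := by
  set x := J y 0 with hx
  set A := f x 0 - u * x with hA
  set B := f y 0 - u * y with hB
  have hxy : x - y = α * A := by have := hJ y 0; rw [← hx, ← hA] at this; linarith
  -- dissipativity
  have hdis : (x - y) * (A - B) ≤ 0 := by
    have h1 := hfmono x y 0
    rw [sq_abs] at h1
    have h2 : (x - y) * (A - B) = (x - y) * (f x 0 - f y 0) - u * (x - y) ^ 2 := by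
      rw [hA, hB]; ring
    linarith
  have hAB : A * (A - B) ≤ 0 := by
    rw [hxy] at hdis
    nlinarith
  have hAle : |A| ≤ |B| := by
    rcases eq_or_ne A 0 with h0 | h0
    · simp [h0, abs_nonneg]
    · have h1 : A * A ≤ |A| * |B| := by
        calc A * A ≤ A * B := by nlinarith
        _ ≤ |A * B| := le_abs_self _
        _ = |A| * |B| := abs_mul A B
      have h2 : |A| * |A| ≤ |A| * |B| := by rwa [← abs_mul_abs_self] at h1
      exact le_of_mul_le_mul_left h2 (abs_pos.mpr h0)
  have hBle : |B| ≤ h + 2 * u * |y| := by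
    have := hfgrow y
    have h3 : |B| ≤ |f y 0| + u * |y| := by
      calc |B| ≤ |f y 0| + |u * y| := abs_sub (f y 0) (u * y)
      _ = |f y 0| + u * |y| := by rw [abs_mul, abs_of_nonneg hu]
    linarith
  calc |A + u * y| ≤ |A| + |u * y| := abs_add_le _ _
    _ = |A| + u * |y| := by rw [abs_mul, abs_of_nonneg hu]
    _ ≤ (h + 2 * u * |y|) + u * |y| := by linarith
    _ = h + 3 * u * |y| := by ring
end

section
/- Let u ≥ 0 and let f : ℝ × ℝ → ℝ be continuous in its first argument and satisfy the monotonicity condition (y₁ − y₂)(f(y₁,z) − f(y₂,z)) ≤ u·|y₁ − y₂|² for all y₁, y₂, z ∈ ℝ. Set F(y,z) := f(y,z) − u·y, for α > 0 let Jᵅ(y,z) be the unique solution x of x − α·F(x,z) = y, Fᵅ(y,z) := F(Jᵅ(y,z),z), and fᵅ(y,z) := Fᵅ(y,z) + u·y. Then for all α, β > 0 and all y₁, y₂, z ∈ ℝ: (fᵅ(y₁,z) − fᵝ(y₂,z))(y₁ − y₂) ≤ (α + β)·(|fᵅ(y₁,z)| + |fᵝ(y₂,z)| + u·(|y₁| +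 |y₂|))² + u·|y₁ − y₂|². -/
/-- Mixed monotonicity estimate for `fᵅ, fᵝ`:
`(fᵅ(y₁,z) − fᵝ(y₂,z))(y₁ − y₂)
  ≤ (α + β)(|fᵅ(y₁,z)| + |fᵝ(y₂,z)| + u(|y₁| + |y₂|))² + u|y₁ − y₂|²`. -/
theorem yosida_falpha_mixed_estimate
    (u : ℝ) (hu : 0 ≤ u) (f : ℝ → ℝ → ℝ)
    (hfcont : ∀ z : ℝ, Continuous fun y => f y z)
    (hfmono : ∀ y₁ y₂ z : ℝ, (y₁ - y₂) * (f y₁ z - f y₂ z) ≤ u * |y₁ - y₂| ^ 2)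
    (J : ℝ → ℝ → ℝ → ℝ)
    (hJ : ∀ α : ℝ, 0 < α → ∀ y z : ℝ,
      J α y z - α * (f (J α y z) z - u * J α y z) = y)
    (α β : ℝ) (hα : 0 < α) (hβ : 0 < β) (y₁ y₂ z : ℝ) :
    (((f (J α y₁ z) z - u * J α y₁ z) + u * y₁) -
        ((f (J β y₂ z) z - u * J β y₂ z) + u * y₂)) * (y₁ - y₂) ≤
      (α + β) *
          (|(f (J α y₁ z) z - u * J α y₁ z) + u * y₁| +
              |(f (J β y₂ z) z - u * J β y₂ z) + u * y₂| +
              u * (|y₁| + |y₂|)) ^ 2 +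
        u * |y₁ - y₂| ^ 2 := by
  set a := J α y₁ z with ha
  set b := J β y₂ z with hb
  set FA := f a z - u * a with hFA
  set FB := f b z - u * b with hFB
  have h1 := hJ α hα y₁ z
  have h2 := hJ β hβ y₂ z
  rw [← ha, ← hFA] at h1
  rw [← hb, ← hFB] at h2
  -- dissipativity of F
  have hdiss : (a - b) * (FA - FB) ≤ 0 := by
    have hm := hfmono a b z
    rw [sq_abs] at hm
    rw [hFA, hFB]
    nlinarith [sq_nonneg (a - b)]
  -- relation y₁ - y₂ = (a - b) - (α*FA - β*FB)
  have hy : y₁ - y₂ = (a - b) - (α * FA - β * FB) := by linarith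
  -- cross-term bound
  have hprod : FA * FB ≤ |FA| * |FB| := by
    calc FA * FB ≤ |FA * FB| := le_abs_self _
    _ = |FA| * |FB| := abs_mul _ _
  have hcross : -((FA - FB) * (α * FA - β * FB)) ≤ (α + β) * (|FA| + |FB|) ^ 2 := by
    nlinarith [sq_abs FA, sq_abs FB, abs_nonneg FA, abs_nonneg FB, sq_nonneg (|FA| - |FB|),
      mul_nonneg (abs_nonneg FA) (abs_nonneg FB), hα.le, hβ.le,
      mul_nonneg hα.le (mul_nonneg (abs_nonneg FA) (abs_nonneg FB)),
      mul_nonneg hβ.le (mul_nonneg (abs_nonneg FA) (abs_nonneg FB))]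
  -- |FA| ≤ |FA + u*y₁| + u*|y₁|
  have hFAb : |FA| ≤ |FA + u * y₁| + u * |y₁| := by
    calc |FA| = |(FA + u * y₁) + (-(u * y₁))| := by ring_nf
    _ ≤ |FA + u * y₁| + |-(u * y₁)| := abs_add_le _ _
    _ = |FA + u * y₁| + u * |y₁| := by rw [abs_neg, abs_mul, abs_of_nonneg hu]
  have hFBb : |FB| ≤ |FB + u * y₂| + u * |y₂| := by
    calc |FB| = |(FB + u * y₂) + (-(u * y₂))| := by ring_nf
    _ ≤ |FB + u * y₂| + |-(u * y₂)| := abs_add_le _ _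
    _ = |FB + u * y₂| + u * |y₂| := by rw [abs_neg, abs_mul, abs_of_nonneg hu]
  have hS : (|FA| + |FB|) ^ 2 ≤
      (|FA + u * y₁| + |FB + u * y₂| + u * (|y₁| + |y₂|)) ^ 2 := by
    have h0 : 0 ≤ |FA| + |FB| := by positivity
    have hle : |FA| + |FB| ≤ |FA + u * y₁| + |FB + u * y₂| + u * (|y₁| + |y₂|) := by
      linarith
    nlinarith
  have hαβ : 0 ≤ α + β := by linarith
  have hexp : (FA + u * y₁ - (FB + u * y₂)) * (y₁ - y₂) =
      (FA - FB) * (y₁ - y₂) + u * (y₁ - y₂) ^ 2 := by ring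
  have hsplit : (FA - FB) * (y₁ - y₂) =
      (a - b) * (FA - FB) - (FA - FB) * (α * FA - β * FB) := by
    rw [hy]; ring
  rw [sq_abs (y₁ - y₂)]
  have := mul_le_mul_of_nonneg_left hS hαβ
  linarith
end

section
/- Let u ≥ 0, L ≥ 0, and let f : ℝ × ℝ → ℝ be continuous in its first argument, satisfy the monotonicity condition (y₁ − y₂)(f(y₁,z) − f(y₂,z)) ≤ u·|y₁ − y₂|² for all y₁, y₂, z ∈ ℝ, and satisfy |f(y,z₁) − f(y,z₂)| ≤ L|z₁ − z₂| for all y, z₁, z₂ ∈ ℝ. Set F(y,z) := f(y,z) − u·y, for α > 0 let Jᵅ(y,z) be the unique solution x of x − α·F(x,z) = y, Fᵅ(y,z) := F(Jᵅ(y,z),z), and fᵅ(y,z) := Fᵅ(y,z) + u·y. Then |fᵅ(y,z₁) − fᵅ(y,z₂)| ≤ L·|z₁ − z₂| for all y, z₁, z₂ ∈ ℝ. -/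
/-- The approximation `fᵅ(y,z) = F(Jᵅ(y,z),z) + u·y` is
`L`-Lipschitz in `z`. -/
theorem yosida_falpha_lipschitz_in_z
    (u L : ℝ) (hu : 0 ≤ u) (hL : 0 ≤ L) (f : ℝ → ℝ → ℝ)
    (hfcont : ∀ z : ℝ, Continuous fun y => f y z)
    (hfmono : ∀ y₁ y₂ z : ℝ, (y₁ - y₂) * (f y₁ z - f y₂ z) ≤ u * |y₁ - y₂| ^ 2)
    (hfLip : ∀ y z₁ z₂ : ℝ, |f y z₁ - f y z₂| ≤ L * |z₁ - z₂|)
    (α : ℝ) (hα : 0 < α) (J : ℝ → ℝ → ℝ)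
    (hJ : ∀ y z : ℝ, J y z - α * (f (J y z) z - u * J y z) = y)
    (y z₁ z₂ : ℝ) :
    |((f (J y z₁) z₁ - u * J y z₁) + u * y) -
        ((f (J y z₂) z₂ - u * J y z₂) + u * y)| ≤ L * |z₁ - z₂| := by
  set x₁ := J y z₁ with hx₁
  set x₂ := J y z₂ with hx₂
  have h1 := hJ y z₁
  have h2 := hJ y z₂
  set d := x₁ - x₂ with hd
  -- d = α * (F₁ - F₂)
  have hdiff : d = α * ((f x₁ z₁ - u * x₁) - (f x₂ z₂ - u * x₂)) := by
    have := sub_eq_zero.mpr (h1.trans h2.symm)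
    linarith [this]
  -- key quadratic estimate
  have hsq : d ^ 2 ≤ α * (|d| * (L * |z₁ - z₂|)) := by
    have e1 : d * (f x₁ z₁ - f x₂ z₁) ≤ u * |d| ^ 2 := hfmono x₁ x₂ z₁
    have e2 : d * (f x₂ z₁ - f x₂ z₂) ≤ |d| * (L * |z₁ - z₂|) := by
      calc d * (f x₂ z₁ - f x₂ z₂) ≤ |d * (f x₂ z₁ - f x₂ z₂)| := le_abs_self _
        _ = |d| * |f x₂ z₁ - f x₂ z₂| := abs_mul _ _
        _ ≤ |d| * (L * |z₁ - z₂|) := by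
            exact mul_le_mul_of_nonneg_left (hfLip x₂ z₁ z₂) (abs_nonneg d)
    have habs : |d| ^ 2 = d ^ 2 := sq_abs d
    have : d ^ 2 = α * (d * ((f x₁ z₁ - u * x₁) - (f x₂ z₂ - u * x₂))) := by
      rw [sq]; nth_rewrite 2 [hdiff]; ring
    rw [this]
    have expand : d * ((f x₁ z₁ - u * x₁) - (f x₂ z₂ - u * x₂))
        = d * (f x₁ z₁ - f x₂ z₁) + d * (f x₂ z₁ - f x₂ z₂) - u * d ^ 2 := by
      ring
    have : d * ((f x₁ z₁ - u * x₁) - (f x₂ z₂ - u * x₂)) ≤ |d| * (L * |z₁ - z₂|) := by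
      rw [expand]
      nlinarith [e1, e2, habs]
    exact mul_le_mul_of_nonneg_left this hα.le
  have hdle : |d| ≤ α * (L * |z₁ - z₂|) := by
    rcases eq_or_lt_of_le (abs_nonneg d) with h0 | h0
    · rw [← h0]
      positivity
    · have : |d| * |d| ≤ |d| * (α * (L * |z₁ - z₂|)) := by
        nlinarith [sq_abs d, hsq]
      exact le_of_mul_le_mul_left this h0
  have hexpr : ((f x₁ z₁ - u * x₁) + u * y) - ((f x₂ z₂ - u * x₂) + u * y) = d / α := by
    field_simp
    linarith [hdiff]
  rw [hexpr, abs_div, abs_of_pos hα, div_le_iff₀ hα]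
  calc |d| ≤ α * (L * |z₁ - z₂|) := hdle
    _ = L * |z₁ - z₂| * α := by ring
end

section
/- Let α > 0, let F₁, F₂ : ℝ → ℝ with F₁ continuous and dissipative, and let y ∈ ℝ. Suppose x₁, x₂ ∈ ℝ satisfy x₁ − α·F₁(x₁) = y and x₂ − α·F₂(x₂) = y. Then |x₁ − x₂| ≤ α·|F₁(x₂) − F₂(x₂)|. -/
/-!
Subtracting the two resolvent equations gives `x₁ - x₂ = α (F₁ x₁ - F₁ x₂) + α (F₁ x₂ - F₂ x₂)`.
Pairing with `x₁ - x₂`, dissipativity makes the first term nonpositive, so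
`‖x₁ - x₂‖² ≤ α ‖x₁ - x₂‖ ‖F₁ x₂ - F₂ x₂‖` by Cauchy–Schwarz.
-/

open RealInnerProductSpace

section Dissipative

variable {E : Type*} [NormedAddCommGroup E] [InnerProductSpace ℝ E]

def Dissipative (F : E → E) : Prop :=
  ∀ u v, ⟪u - v, F u - F v⟫ ≤ 0

theorem dissipative_real_iff {F : ℝ → ℝ} :
    Dissipative F ↔ ∀ u v : ℝ, (u - v) * (F u - F v) ≤ 0 := by
  simp only [Dissipative, RCLike.inner_apply, conj_trivial, mul_comm]

theorem Dissipative.norm_sub_le_of_resolvent_eq {F G : E → E} (hF : Dissipative F)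
    {α : ℝ} (hα : 0 ≤ α) {x₁ x₂ : E} (h : x₁ - α • F x₁ = x₂ - α • G x₂) :
    ‖x₁ - x₂‖ ≤ α * ‖F x₂ - G x₂‖ := by
  set d := x₁ - x₂
  have hd : d = α • (F x₁ - F x₂) + α • (F x₂ - G x₂) := by
    linear_combination (norm := module) h
  have key : ‖d‖ * ‖d‖ ≤ ‖d‖ * (α * ‖F x₂ - G x₂‖) :=
    calc ‖d‖ * ‖d‖ = ⟪d, d⟫ := (real_inner_self_eq_norm_mul_norm d).symm
      _ = α * ⟪d, F x₁ - F x₂⟫ + α * ⟪d, F x₂ - G x₂⟫ := by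
        nth_rewrite 2 [hd]
        rw [inner_add_right, real_inner_smul_right, real_inner_smul_right]
      _ ≤ α * ⟪d, F x₂ - G x₂⟫ :=
        add_le_of_nonpos_left (mul_nonpos_of_nonneg_of_nonpos hα (hF x₁ x₂))
      _ ≤ α * (‖d‖ * ‖F x₂ - G x₂‖) :=
        mul_le_mul_of_nonneg_left (real_inner_le_norm _ _) hα
      _ = ‖d‖ * (α * ‖F x₂ - G x₂‖) := mul_left_comm _ _ _
  rcases (norm_nonneg d).eq_or_lt with hzero | hpos
  · rw [← hzero]
    positivity
  · exact le_of_mul_le_mul_left key hpos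

end Dissipative

theorem yosida_resolvent_stability_general
    (α : ℝ) (hα : 0 < α) (F₁ F₂ : ℝ → ℝ)
    (hF₁diss : ∀ y₁ y₂ : ℝ, (y₁ - y₂) * (F₁ y₁ - F₁ y₂) ≤ 0)
    (y x₁ x₂ : ℝ)
    (hx₁ : x₁ - α * F₁ x₁ = y) (hx₂ : x₂ - α * F₂ x₂ = y) :
    |x₁ - x₂| ≤ α * |F₁ x₂ - F₂ x₂| :=
  (dissipative_real_iff.mpr hF₁diss).norm_sub_le_of_resolvent_eq hα.le (hx₁.trans hx₂.symm)

/-- Resolvent stability: if `x₁ − α·F₁(x₁) = y` and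
`x₂ − α·F₂(x₂) = y` with `F₁` continuous and dissipative, then
`|x₁ − x₂| ≤ α·|F₁(x₂) − F₂(x₂)|`. -/
theorem yosida_resolvent_stability
    (α : ℝ) (hα : 0 < α) (F₁ F₂ : ℝ → ℝ)
    (hF₁cont : Continuous F₁)
    (hF₁diss : ∀ y₁ y₂ : ℝ, (y₁ - y₂) * (F₁ y₁ - F₁ y₂) ≤ 0)
    (y x₁ x₂ : ℝ)
    (hx₁ : x₁ - α * F₁ x₁ = y) (hx₂ : x₂ - α * F₂ x₂ = y) :
    |x₁ - x₂| ≤ α * |F₁ x₂ - F₂ x₂| :=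
  yosida_resolvent_stability_general α hα F₁ F₂ hF₁diss y x₁ x₂ hx₁ hx₂
end

section
/- Let u ≥ 0, L ≥ 0, h ≥ 0, and let f : ℝ × ℝ → ℝ be continuous in its first argument, satisfy the monotonicity condition (y₁ − y₂)(f(y₁,z) − f(y₂,z)) ≤ u·|y₁ − y₂|² for all y₁, y₂, z ∈ ℝ, satisfy |f(y,z₁) − f(y,z₂)| ≤ L|z₁ − z₂| for all y, z₁, z₂ ∈ ℝ, and satisfy the growth condition |f(y,0)| ≤ h + u·|y| for all y ∈ ℝ. Set F(y,z) := f(y,z) − u·y, for α > 0 let Jᵅ(y,z) be the unique solution x of x − α·F(x,z) = y, Fᵅ(y,z) := F(Jᵅ(y,z),z), and fᵅ(y,z) := Fᵅ(y,z) + u·y. Then |fᵅ(y,z)| ≤ h + 3u·|y| + L·|z| for all y, z ∈ ℝ. -/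
/-- Under monotonicity in `y`, `L`-Lipschitz continuity in `z`,
and the growth condition `|f(y,0)| ≤ h + u·|y|`, the approximation satisfies
`|fᵅ(y,z)| ≤ h + 3u·|y| + L·|z|`. -/
theorem yosida_falpha_growth
    (u L h : ℝ) (hu : 0 ≤ u) (hL : 0 ≤ L) (hh : 0 ≤ h) (f : ℝ → ℝ → ℝ)
    (hfcont : ∀ z : ℝ, Continuous fun y => f y z)
    (hfmono : ∀ y₁ y₂ z : ℝ, (y₁ - y₂) * (f y₁ z - f y₂ z) ≤ u * |y₁ - y₂| ^ 2)
    (hfLip : ∀ y z₁ z₂ : ℝ, |f y z₁ - f y z₂| ≤ L * |z₁ - z₂|)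
    (hfgrow : ∀ y : ℝ, |f y 0| ≤ h + u * |y|)
    (α : ℝ) (hα : 0 < α) (J : ℝ → ℝ → ℝ)
    (hJ : ∀ y z : ℝ, J y z - α * (f (J y z) z - u * J y z) = y)
    (y z : ℝ) :
    |(f (J y z) z - u * J y z) + u * y| ≤ h + 3 * u * |y| + L * |z| := by
  set x := J y z with hx
  set A := f x z - u * x with hA
  set B := f y z - u * y with hB
  have hJy := hJ y z
  have hxy : x - y = α * A := by simp only [hx, hA]; linarith [hJy]
  -- dissipativity gives (x - y) * (A - B) ≤ 0
  have hmono := hfmono x y z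
  have hsq : |x - y| ^ 2 = (x - y) ^ 2 := sq_abs _
  have hdiss : (x - y) * (A - B) ≤ 0 := by
    have : (x - y) * (A - B) = (x - y) * (f x z - f y z) - u * (x - y) ^ 2 := by
      simp only [hA, hB]; ring
    rw [this]
    nlinarith [hmono, hsq]
  -- hence α * A * (A - B) ≤ 0, so A^2 ≤ A * B
  have hAB : A ^ 2 ≤ A * B := by
    rw [hxy] at hdiss
    nlinarith
  have hAleB : |A| ≤ |B| := by
    rcases eq_or_ne A 0 with h0 | h0
    · simp [h0]
    · have hApos : 0 < |A| := abs_pos.mpr h0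
      have : |A| ^ 2 ≤ |A| * |B| := by
        calc |A| ^ 2 = A ^ 2 := sq_abs _
          _ ≤ A * B := hAB
          _ ≤ |A * B| := le_abs_self _
          _ = |A| * |B| := abs_mul _ _
      nlinarith
  -- bound |B|
  have hBbound : |B| ≤ h + 2 * u * |y| + L * |z| := by
    have h1 : |f y z - f y 0| ≤ L * |z| := by
      simpa using hfLip y z 0
    have h2 := hfgrow y
    have h3 : |u * y| = u * |y| := by
      rw [abs_mul, abs_of_nonneg hu]
    calc |B| = |(f y z - f y 0) + (f y 0) + (-(u * y))| := by rw [hB]; ring_nf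
      _ ≤ |(f y z - f y 0) + (f y 0)| + |(-(u * y))| := abs_add_le _ _
      _ ≤ |f y z - f y 0| + |f y 0| + |(-(u * y))| := by
          linarith [abs_add_le (f y z - f y 0) (f y 0)]
      _ ≤ L * |z| + (h + u * |y|) + u * |y| := by
          rw [abs_neg, h3]; linarith
      _ = h + 2 * u * |y| + L * |z| := by ring
  calc |A + u * y| ≤ |A| + |u * y| := abs_add_le _ _
    _ = |A| + u * |y| := by rw [abs_mul, abs_of_nonneg hu]
    _ ≤ (h + 2 * u * |y| + L * |z|) + u * |y| := by linarith [hAleB]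
    _ = h + 3 * u * |y| + L * |z| := by ring
end
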